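/- Suppose X has no mean uncertainty over 𝒫, i.e. E_P[X] = μ_X for all P ∈ 𝒫. Let ρ_Y = (sup_P E_P[Y] + inf_P E_P[Y])/2. Then the upper covariance satisfies C̄(X,Y) := sup_{P∈conv(𝒫)} Cov_P(X,Y) = sup_{P∈𝒫} E_P[(X−μ_X)(Y−ρ_Y)], and the lower covariance satisfies C(X,Y) = inf_{P∈𝒫} E_P[(X−μ_X)(Y−ρ_Y)]. -/

import Mathlib

/-!
Every finite mixture `Q` of measures in `S` is a probability measure under which `X` still has
mean `μX`, so `covP Q X Y = E_Q[(X - μX) (Y - ρY)]` for any constant `ρY`; and this expectation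
is the same mixture of the values `E_P[(X - μX) (Y - ρY)]`, `P ∈ S`. The covariances over the
hull therefore form a set of reals lying between those values and their convex hull, and such a
set has the same supremum and infimum as the values themselves.
-/

open MeasureTheory ENNReal

variable {Ω : Type*} [MeasurableSpace Ω]

/-- Classical covariance of `X` and `Y` under `P`. -/
noncomputable def covP (P : Measure Ω) (X Y : Ω → ℝ) : ℝ :=
  (∫ ω, X ω * Y ω ∂P) - (∫ ω, X ω ∂P) * (∫ ω, Y ω ∂P)

/-- Classical variance of `X` under `P`. -/
noncomputable def varP (P : Measure Ω) (X : Ω → ℝ) : ℝ :=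
  (∫ ω, (X ω) ^ 2 ∂P) - (∫ ω, X ω ∂P) ^ 2

/-- The convex hull of a set of measures: all finite convex combinations. -/
def convHullP (S : Set (Measure Ω)) : Set (Measure Ω) :=
  { Q | ∃ (n : ℕ) (w : Fin n → ℝ≥0∞) (P : Fin n → Measure Ω),
      (∑ i, w i = 1) ∧ (∀ i, P i ∈ S) ∧ Q = ∑ i, w i • P i }

theorem Real.sSup_eq_of_subset_convexHull {A B : Set ℝ} (hBA : B ⊆ A)
    (hAB : A ⊆ convexHull ℝ B) : sSup A = sSup B := by
  by_cases hB : BddAbove B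
  · rcases B.eq_empty_or_nonempty with rfl | hne
    · rw [Set.subset_eq_empty hAB convexHull_empty]
    have hA : A ⊆ Set.Iic (sSup B) :=
      hAB.trans (convexHull_min (fun _ hb => le_csSup hB hb) (convex_Iic _))
    exact le_antisymm (csSup_le (hne.mono hBA) hA) (csSup_le_csSup ⟨_, hA⟩ hne hBA)
  · rw [Real.sSup_of_not_bddAbove hB, Real.sSup_of_not_bddAbove fun hA => hB (hA.mono hBA)]

theorem Real.sInf_eq_of_subset_convexHull {A B : Set ℝ} (hBA : B ⊆ A)
    (hAB : A ⊆ convexHull ℝ B) : sInf A = sInf B := by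
  by_cases hB : BddBelow B
  · rcases B.eq_empty_or_nonempty with rfl | hne
    · rw [Set.subset_eq_empty hAB convexHull_empty]
    have hA : A ⊆ Set.Ici (sInf B) :=
      hAB.trans (convexHull_min (fun _ hb => csInf_le hB hb) (convex_Ici _))
    exact le_antisymm (csInf_le_csInf ⟨_, hA⟩ hne hBA) (le_csInf (hne.mono hBA) hA)
  · rw [Real.sInf_of_not_bddBelow hB, Real.sInf_of_not_bddBelow fun hA => hB (hA.mono hBA)]

/-- The centring constant `c` of `Y` is arbitrary because `X - ∫ X` has mean zero. -/
theorem covP_eq_integral_mul_sub {P : Measure Ω} [IsProbabilityMeasure P] {X Y : Ω → ℝ}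
    (hX : Integrable X P) (hY : Integrable Y P) (hXY : Integrable (fun ω => X ω * Y ω) P)
    {m : ℝ} (hm : ∫ ω, X ω ∂P = m) (c : ℝ) :
    covP P X Y = ∫ ω, (X ω - m) * (Y ω - c) ∂P := by
  have hXc : Integrable (fun ω => X ω * Y ω - c * X ω) P := hXY.sub (hX.const_mul c)
  have hXcm : Integrable (fun ω => X ω * Y ω - c * X ω - m * Y ω) P := hXc.sub (hY.const_mul m)
  have hexpand : (fun ω => (X ω - m) * (Y ω - c))
      = fun ω => (X ω * Y ω - c * X ω - m * Y ω) + m * c := by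
    funext ω; ring
  rw [hexpand, integral_add hXcm (integrable_const _),
    integral_sub hXc (hY.const_mul m), integral_sub hXY (hX.const_mul c), integral_const_mul,
    integral_const_mul, integral_const, covP, hm]
  simp only [probReal_univ, smul_eq_mul, one_mul]
  ring

theorem ENNReal.ne_top_of_sum_eq_one {ι : Type*} [Fintype ι] {w : ι → ℝ≥0∞}
    (hw : ∑ i, w i = 1) (i : ι) : w i ≠ ∞ :=
  ne_top_of_le_ne_top one_ne_top (hw ▸ Finset.single_le_sum (fun _ _ => zero_le)
    (Finset.mem_univ i))

section convHullP

variable {S : Set (Measure Ω)} {Q : Measure Ω}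

theorem self_mem_convHullP {P : Measure Ω} (hP : P ∈ S) : P ∈ convHullP S :=
  ⟨1, fun _ => 1, fun _ => P, by simp, fun _ => hP, by simp⟩

theorem isProbabilityMeasure_of_mem_convHullP (hS : ∀ P ∈ S, IsProbabilityMeasure P)
    (hQ : Q ∈ convHullP S) : IsProbabilityMeasure Q := by
  obtain ⟨n, w, P, hw, hPS, rfl⟩ := hQ
  constructor
  simp [Measure.finsetSum_apply, (hS _ (hPS _)).measure_univ, hw]

theorem integrable_of_mem_convHullP {f : Ω → ℝ} (hf : ∀ P ∈ S, Integrable f P)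
    (hQ : Q ∈ convHullP S) : Integrable f Q := by
  obtain ⟨n, w, P, hw, hPS, rfl⟩ := hQ
  exact integrable_finsetSum_measure.2 fun i _ =>
    (hf _ (hPS i)).smul_measure (ne_top_of_sum_eq_one hw i)

theorem integral_mem_convexHull_of_mem_convHullP {f : Ω → ℝ}
    (hf : ∀ P ∈ S, Integrable f P) (hQ : Q ∈ convHullP S) :
    ∫ ω, f ω ∂Q ∈ convexHull ℝ ((fun P => ∫ ω, f ω ∂P) '' S) := by
  obtain ⟨n, w, P, hw, hPS, rfl⟩ := hQ
  rw [integral_finsetSum_measure fun i _ =>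
    (hf _ (hPS i)).smul_measure (ne_top_of_sum_eq_one hw i)]
  simp only [integral_smul_measure]
  refine (convex_convexHull ℝ _).sum_mem (fun i _ => ENNReal.toReal_nonneg) ?_
    fun i _ => subset_convexHull ℝ _ ⟨P i, hPS i, rfl⟩
  rw [← ENNReal.toReal_sum fun i _ => ne_top_of_sum_eq_one hw i, hw, ENNReal.toReal_one]

end convHullP

theorem stmt12_general (S : Set (Measure Ω))
    (hprob : ∀ P ∈ S, IsProbabilityMeasure P) (X Y : Ω → ℝ)
    (hXY : ∀ P ∈ S, MemLp X 2 P ∧ MemLp Y 2 P)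
    (μX : ℝ) (hμX : ∀ P ∈ S, (∫ ω, X ω ∂P) = μX)
    (ρY : ℝ) :
    sSup ((fun P => covP P X Y) '' convHullP S) =
      sSup ((fun P => ∫ ω, (X ω - μX) * (Y ω - ρY) ∂P) '' S) ∧
    sInf ((fun P => covP P X Y) '' convHullP S) =
      sInf ((fun P => ∫ ω, (X ω - μX) * (Y ω - ρY) ∂P) '' S) := by
  have hX : ∀ P ∈ S, Integrable X P := fun P hP =>
    have := hprob P hP; (hXY P hP).1.integrable one_le_two
  have hY : ∀ P ∈ S, Integrable Y P := fun P hP =>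
    have := hprob P hP; (hXY P hP).2.integrable one_le_two
  have hmean : ∀ Q ∈ convHullP S, ∫ ω, X ω ∂Q = μX := fun Q hQ => by
    have hsub : (fun P => ∫ ω, X ω ∂P) '' S ⊆ {μX} := by
      rintro _ ⟨P, hP, rfl⟩; exact hμX P hP
    simpa using convexHull_mono hsub (integral_mem_convexHull_of_mem_convHullP hX hQ)
  have hcov : ∀ Q ∈ convHullP S, covP Q X Y = ∫ ω, (X ω - μX) * (Y ω - ρY) ∂Q :=
    fun Q hQ =>
    have := isProbabilityMeasure_of_mem_convHullP hprob hQ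
    covP_eq_integral_mul_sub (integrable_of_mem_convHullP hX hQ)
      (integrable_of_mem_convHullP hY hQ)
      (integrable_of_mem_convHullP (fun P hP => (hXY P hP).1.integrable_mul (hXY P hP).2) hQ)
      (hmean Q hQ) ρY
  have hsub : (fun P => ∫ ω, (X ω - μX) * (Y ω - ρY) ∂P) '' S
      ⊆ (fun P => covP P X Y) '' convHullP S := by
    rintro _ ⟨P, hP, rfl⟩
    exact ⟨P, self_mem_convHullP hP, hcov P (self_mem_convHullP hP)⟩
  have hhull : (fun P => covP P X Y) '' convHullP S
      ⊆ convexHull ℝ ((fun P => ∫ ω, (X ω - μX) * (Y ω - ρY) ∂P) '' S) := by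
    rintro _ ⟨Q, hQ, rfl⟩
    simp only [hcov Q hQ]
    refine integral_mem_convexHull_of_mem_convHullP (fun P hP => ?_) hQ
    have := hprob P hP
    exact ((hXY P hP).1.sub (memLp_const μX)).integrable_mul ((hXY P hP).2.sub (memLp_const ρY))
  exact ⟨Real.sSup_eq_of_subset_convexHull hsub hhull,
    Real.sInf_eq_of_subset_convexHull hsub hhull⟩

theorem stmt12 (S : Set (Measure Ω)) (hS : S.Nonempty)
    (hprob : ∀ P ∈ S, IsProbabilityMeasure P) (X Y : Ω → ℝ)
    (hXY : ∀ P ∈ S, MemLp X 2 P ∧ MemLp Y 2 P)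
    (hbdd : BddAbove ((fun P => (∫ ω, (X ω) ^ 2 ∂P) + ∫ ω, (Y ω) ^ 2 ∂P) '' S))
    (μX : ℝ) (hμX : ∀ P ∈ S, (∫ ω, X ω ∂P) = μX)
    (ρY : ℝ)
    (hρY : ρY = (sSup ((fun P => ∫ ω, Y ω ∂P) '' S) +
                  sInf ((fun P => ∫ ω, Y ω ∂P) '' S)) / 2) :
    sSup ((fun P => covP P X Y) '' convHullP S) =
      sSup ((fun P => ∫ ω, (X ω - μX) * (Y ω - ρY) ∂P) '' S) ∧
    sInf ((fun P => covP P X Y) '' convHullP S) =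
      sInf ((fun P => ∫ ω, (X ω - μX) * (Y ω - ρY) ∂P) '' S) :=
  stmt12_general S hprob X Y hXY μX hμX ρY
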